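/- arXiv:2105.10946 — 4 statements merged into one kernel-verified Lean document; each statement's English description precedes it below -/
import Mathlib

section
/- The projection of a polyhedral cone is a polyhedral cone: if C ⊆ k^(n+1) is of the form {x : A x ≥ 0} for some matrix A, then C' = {v ∈ kⁿ : ∃ x ∈ k, (v, x) ∈ C} is also of the form {v : B v ≥ 0} for some matrix B. -/
open Matrix

/-- Fourier–Motzkin elimination: the projection of a polyhedral cone is a
polyhedral cone. -/
theorem projection_of_polyhedral_cone (k : Type*) [Field k] [LinearOrder k] [IsStrictOrderedRing k]
    (n p : ℕ) (A : Matrix (Fin p) (Fin (n + 1)) k) :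
    ∃ (q : ℕ) (B : Matrix (Fin q) (Fin n) k),
      ∀ v : Fin n → k,
        (0 ≤ B.mulVec v) ↔ ∃ x : k, 0 ≤ A.mulVec (Fin.snoc v x) := by
  classical
  set c : Fin p → k := fun i => A i (Fin.last n) with hc
  set f : Fin p → (Fin n → k) → k := fun i v => ∑ j : Fin n, A i j.castSucc * v j with hf
  have hmul : ∀ (v : Fin n → k) (x : k) (i : Fin p),
      A.mulVec (Fin.snoc v x) i = f i v + c i * x := by
    intro v x i
    simp only [Matrix.mulVec, dotProduct]
    rw [Fin.sum_univ_castSucc]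
    simp [hf, hc]
  set I := ({i : Fin p // c i = 0} ⊕ ({i : Fin p // 0 < c i} × {j : Fin p // c j < 0})) with hI
  set B' : I → Fin n → k := Sum.elim
      (fun i m => A i.1 m.castSucc)
      (fun pr m => c pr.1.1 * A pr.2.1 m.castSucc + (-c pr.2.1) * A pr.1.1 m.castSucc)
    with hB'
  have dot_inl : ∀ (i : {i : Fin p // c i = 0}) (v : Fin n → k),
      ∑ m, B' (Sum.inl i) m * v m = f i.1 v := by
    intro i v; simp [hB', hf]
  have dot_inr : ∀ (pr : {i : Fin p // 0 < c i} × {j : Fin p // c j < 0}) (v : Fin n → k),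
      ∑ m, B' (Sum.inr pr) m * v m = c pr.1.1 * f pr.2.1 v + (-c pr.2.1) * f pr.1.1 v := by
    intro pr v
    simp only [hB', Sum.elim_inr, hf, Finset.mul_sum]
    rw [← Finset.sum_add_distrib]
    apply Finset.sum_congr rfl
    intros
    ring
  set q := Fintype.card I with hq
  set e : Fin q ≃ I := (Fintype.equivFin I).symm with he
  refine ⟨q, fun r m => B' (e r) m, ?_⟩
  intro v
  have hiff : (0 ≤ Matrix.mulVec (fun r m => B' (e r) m) v) ↔
      ∀ ι : I, 0 ≤ ∑ m, B' ι m * v m := by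
    constructor
    · intro h ι
      have := h (e.symm ι)
      simpa [Matrix.mulVec, dotProduct] using this
    · intro h r
      have := h (e r)
      simpa [Matrix.mulVec, dotProduct] using this
  rw [hiff]
  constructor
  · intro h
    have hZ : ∀ i : Fin p, c i = 0 → 0 ≤ f i v := by
      intro i hi
      have := h (Sum.inl ⟨i, hi⟩)
      rwa [dot_inl] at this
    have hPN : ∀ i j : Fin p, 0 < c i → c j < 0 →
        0 ≤ c i * f j v + (-c j) * f i v := by
      intro i j hi hj
      have := h (Sum.inr (⟨i, hi⟩, ⟨j, hj⟩))
      rwa [dot_inr] at this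
    set Pset : Finset (Fin p) := Finset.univ.filter (fun i => 0 < c i) with hPset
    set Nset : Finset (Fin p) := Finset.univ.filter (fun i => c i < 0) with hNset
    set g : Fin p → k := fun i => -f i v / c i with hg
    have key : ∀ i ∈ Pset, ∀ j ∈ Nset, g i ≤ g j := by
      intro i hiP j hjN
      have hi : 0 < c i := by simpa [hPset] using hiP
      have hj : c j < 0 := by simpa [hNset] using hjN
      have hcj : (0:k) < -c j := by linarith
      have hpn := hPN i j hi hj
      show -f i v / c i ≤ -f j v / c j
      have hsym : -f j v / c j = f j v / (-c j) := by
        rw [neg_div, div_neg]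
      rw [hsym, div_le_div_iff₀ hi hcj]
      nlinarith
    set x : k := if hP : Pset.Nonempty then Pset.sup' hP g
        else if hN : Nset.Nonempty then Nset.inf' hN g else 0 with hx
    refine ⟨x, ?_⟩
    rw [Pi.le_def]
    intro i
    rw [hmul, Pi.zero_apply]
    rcases lt_trichotomy (c i) 0 with hci | hci | hci
    · -- c i < 0 : need x ≤ g i
      have hiN : i ∈ Nset := by simp [hNset, hci]
      have hxle : x ≤ g i := by
        rw [hx]
        split_ifs with hP hN
        · exact Finset.sup'_le hP g (fun b hb => key b hb i hiN)
        · exact Finset.inf'_le g hiN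
        · exact absurd ⟨i, hiN⟩ hN
      have := (le_div_iff_of_neg hci).mp hxle
      linarith
    · have := hZ i hci
      rw [hci]; linarith
    · -- 0 < c i : need g i ≤ x
      have hiP : i ∈ Pset := by simp [hPset, hci]
      have hxge : g i ≤ x := by
        rw [hx]
        split_ifs with hP hN
        · exact Finset.le_sup' g hiP
        · exact absurd ⟨i, hiP⟩ hP
        · exact absurd ⟨i, hiP⟩ hP
      have := (div_le_iff₀ hci).mp hxge
      linarith
  · rintro ⟨x, hxA⟩
    have hx : ∀ i : Fin p, 0 ≤ f i v + c i * x := by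
      intro i
      have h0 := hxA i
      rw [Pi.zero_apply] at h0
      rwa [hmul] at h0
    rintro (⟨i, hi⟩ | ⟨⟨i, hi⟩, ⟨j, hj⟩⟩)
    · rw [dot_inl]
      have := hx i
      rw [hi] at this; linarith
    · rw [dot_inr]
      have h1 : 0 ≤ c i * (f j v + c j * x) := mul_nonneg hi.le (hx j)
      have h2 : 0 ≤ (-c j) * (f i v + c i * x) :=
        mul_nonneg (by linarith) (hx i)
      have hr : c i * f j v + (-c j) * f i v
          = c i * (f j v + c j * x) + (-c j) * (f i v + c i * x) := by ring
      rw [hr]; linarith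
end

section
/- Weyl–Minkowski theorem (one direction): every polyhedral cone C = {x ∈ kⁿ : A x ≥ 0} is finitely generated, i.e. there exist finitely many vectors v₁,…,v_p ∈ kⁿ such that C = {z₁v₁ + ⋯ + z_pv_p : zᵢ ≥ 0}. -/
open Matrix Finset

section Aux
variable {k : Type*} [Field k] [LinearOrder k] [IsStrictOrderedRing k] {n : ℕ}

private lemma dot_sum_smul {ι : Type*} [Fintype ι] (a : Fin n → k) (z : ι → k)
    (v : ι → Fin n → k) :
    a ⬝ᵥ (∑ i, z i • v i) = ∑ i, z i * (a ⬝ᵥ v i) := by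
  simp only [dotProduct, Finset.sum_apply, Pi.smul_apply, smul_eq_mul, Finset.mul_sum]
  rw [Finset.sum_comm]
  exact Finset.sum_congr rfl fun i _ => Finset.sum_congr rfl fun j _ => by ring

private lemma double_sum_ite {ι : Type*} [Fintype ι] (P Q : ι → Prop)
    [DecidablePred P] [DecidablePred Q] (s : ι → k) (u : ι → Fin n → k) :
    ∑ i, ∑ j, (if P i ∧ Q j then s i • u j else 0) =
      (∑ i, if P i then s i else 0) • (∑ j, if Q j then u j else 0) := by
  rw [Finset.sum_smul]
  refine Finset.sum_congr rfl fun i _ => ?_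
  by_cases hi : P i
  · simp only [hi, true_and, if_pos]
    rw [Finset.smul_sum]
    exact Finset.sum_congr rfl fun j _ => by split_ifs <;> simp
  · simp [hi]

private lemma cone_fg_list (L : List (Fin n → k)) :
    ∃ (ι : Type) (_ : Fintype ι) (v : ι → Fin n → k),
      ∀ x : Fin n → k,
        (∀ a ∈ L, 0 ≤ a ⬝ᵥ x) ↔
          ∃ z : ι → k, (∀ i, 0 ≤ z i) ∧ x = ∑ i, z i • v i := by
  classical
  induction L with
  | nil =>
    refine ⟨Fin n ⊕ Fin n, inferInstance,
      Sum.elim (fun j => Pi.single j 1) (fun j => -Pi.single j 1), fun x => ?_⟩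
    simp only [List.not_mem_nil, false_implies, implies_true, true_iff]
    refine ⟨Sum.elim (fun j => max (x j) 0) (fun j => max (-x j) 0), ?_, ?_⟩
    · rintro (j | j) <;> simp [le_max_right]
    · rw [Fintype.sum_sum_type]
      funext j
      simp only [Sum.elim_inl, Sum.elim_inr, Pi.add_apply, Finset.sum_apply,
        Pi.smul_apply, Pi.neg_apply, Pi.single_apply, smul_eq_mul, mul_ite, mul_one,
        mul_zero, mul_neg, Finset.sum_ite_eq', Finset.mem_univ, if_true,
        Finset.sum_neg_distrib, Finset.sum_ite_eq]
      rw [← sub_eq_add_neg, max_zero_sub_max_neg_zero_eq_self]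
  | cons a L IH =>
    obtain ⟨ι, _, v, hv⟩ := IH
    set c : ι → k := fun i => a ⬝ᵥ v i with hc
    have hvL : ∀ a' ∈ L, ∀ i, 0 ≤ a' ⬝ᵥ v i := by
      intro a' ha' i
      refine (hv (v i)).mpr ⟨Pi.single i 1, fun j => ?_, ?_⟩ a' ha'
      · by_cases h : j = i <;> simp [Pi.single_apply, h]
      · rw [Finset.sum_eq_single i]
        · simp
        · intro j _ hj; simp [Pi.single_apply, hj]
        · simp
    refine ⟨ι ⊕ ι × ι, inferInstance,
      Sum.elim (fun i => if 0 ≤ c i then v i else 0)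
        (fun q => if 0 ≤ c q.1 ∧ ¬ 0 ≤ c q.2 then c q.1 • v q.2 + (-c q.2) • v q.1 else 0),
      fun x => ?_⟩
    constructor
    · intro hx
      have hxa : 0 ≤ a ⬝ᵥ x := hx a (List.mem_cons_self)
      obtain ⟨z, hz, hxz⟩ := (hv x).mp (fun a' ha' => hx a' (List.mem_cons_of_mem a ha'))
      set S : k := ∑ i, if 0 ≤ c i then z i * c i else 0 with hS
      set T : k := ∑ i, if ¬ 0 ≤ c i then z i * (-c i) else 0 with hT
      have hax : a ⬝ᵥ x = S - T := by
        rw [hxz, dot_sum_smul, hS, hT, ← Finset.sum_sub_distrib]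
        refine Finset.sum_congr rfl fun i _ => ?_
        rw [hc]
        split_ifs <;> ring
      have hS0 : 0 ≤ S := Finset.sum_nonneg fun i _ => by
        split_ifs with h
        · exact mul_nonneg (hz i) h
        · exact le_refl 0
      have hT0 : 0 ≤ T := Finset.sum_nonneg fun i _ => by
        split_ifs with h
        · exact le_refl 0
        · exact mul_nonneg (hz i) (neg_nonneg.mpr (le_of_not_ge h))
      have hTS : T ≤ S := by rw [hax] at hxa; linarith
      by_cases hSz : S = 0
      · have hTz : T = 0 := le_antisymm (hSz ▸ hTS) hT0
        have hzero : ∀ i, ¬ 0 ≤ c i → z i = 0 := by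
          intro i hi
          have h2 := (Finset.sum_eq_zero_iff_of_nonneg (fun i _ => by
            split_ifs with h
            · exact le_refl 0
            · exact mul_nonneg (hz i) (neg_nonneg.mpr (le_of_not_ge h)))).mp
            (hT.symm.trans hTz) i (Finset.mem_univ i)
          rw [if_pos hi] at h2
          rcases mul_eq_zero.mp h2 with h | h
          · exact h
          · exact absurd (le_of_eq (neg_eq_zero.mp h).symm) hi
        refine ⟨Sum.elim z 0, ?_, ?_⟩
        · rintro (i | q) <;> simp [hz]
        · rw [Fintype.sum_sum_type]
          simp only [Sum.elim_inl, Sum.elim_inr, Pi.zero_apply, zero_smul,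
            Finset.sum_const_zero, add_zero]
          rw [hxz]
          refine Finset.sum_congr rfl fun i _ => ?_
          split_ifs with h
          · rfl
          · rw [hzero i h]; simp
      · have hSpos : 0 < S := lt_of_le_of_ne hS0 (Ne.symm hSz)
        set uP : Fin n → k := ∑ i, if 0 ≤ c i then z i • v i else 0 with hup
        set uN : Fin n → k := ∑ i, if ¬ 0 ≤ c i then z i • v i else 0 with hum
        have hxsplit : x = uP + uN := by
          rw [hxz, hup, hum, ← Finset.sum_add_distrib]
          refine Finset.sum_congr rfl fun i _ => ?_
          split_ifs <;> simp
        refine ⟨Sum.elim (fun i => if 0 ≤ c i then z i * ((S - T) / S) else 0)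
          (fun q => if 0 ≤ c q.1 ∧ ¬ 0 ≤ c q.2 then z q.1 * z q.2 / S else 0), ?_, ?_⟩
        · rintro (i | q)
          · simp only [Sum.elim_inl]
            split_ifs with h
            · exact mul_nonneg (hz i) (div_nonneg (by linarith) hS0)
            · exact le_refl 0
          · simp only [Sum.elim_inr]
            split_ifs with h
            · exact div_nonneg (mul_nonneg (hz q.1) (hz q.2)) hS0
            · exact le_refl 0
        · rw [Fintype.sum_sum_type]
          simp only [Sum.elim_inl, Sum.elim_inr]
          have hA : (∑ i, (if 0 ≤ c i then z i * ((S - T) / S) else 0) •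
              (if 0 ≤ c i then v i else 0)) = ((S - T) / S) • uP := by
            rw [hup, Finset.smul_sum]
            refine Finset.sum_congr rfl fun i _ => ?_
            split_ifs with h
            · funext t
              simp only [Pi.smul_apply, smul_eq_mul]
              ring
            · simp
          have hB : (∑ q : ι × ι, (if 0 ≤ c q.1 ∧ ¬ 0 ≤ c q.2 then z q.1 * z q.2 / S else 0) •
              (if 0 ≤ c q.1 ∧ ¬ 0 ≤ c q.2 then c q.1 • v q.2 + (-c q.2) • v q.1 else 0)) =
              uN + (T / S) • uP := by
            rw [Fintype.sum_prod_type]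
            have step : ∀ i j : ι, (if 0 ≤ c i ∧ ¬ 0 ≤ c j then z i * z j / S else 0) •
                (if 0 ≤ c i ∧ ¬ 0 ≤ c j then c i • v j + (-c j) • v i else 0) =
                (if 0 ≤ c i ∧ ¬ 0 ≤ c j then (z i * c i / S) • (z j • v j) else 0) +
                (if ¬ 0 ≤ c j ∧ 0 ≤ c i then (z j * (-c j) / S) • (z i • v i) else 0) := by
              intro i j
              by_cases h : 0 ≤ c i ∧ ¬ 0 ≤ c j
              · simp only [if_pos h, if_pos (show ¬ 0 ≤ c j ∧ 0 ≤ c i from ⟨h.2, h.1⟩)]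
                funext t
                simp only [Pi.add_apply, Pi.smul_apply, smul_eq_mul, Pi.neg_apply]
                field_simp
              · simp only [if_neg h,
                  if_neg (show ¬ (¬ 0 ≤ c j ∧ 0 ≤ c i) from fun hh => h ⟨hh.2, hh.1⟩)]
                simp
            simp only [step]
            simp only [Finset.sum_add_distrib]
            have hSS : (∑ i, if 0 ≤ c i then z i * c i / S else 0) = S / S := by
              rw [hS, Finset.sum_div]
              exact Finset.sum_congr rfl fun i _ => by split_ifs <;> simp
            have hTT : (∑ j, if ¬ 0 ≤ c j then z j * (-c j) / S else 0) = T / S := by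
              rw [hT, Finset.sum_div]
              exact Finset.sum_congr rfl fun j _ => by split_ifs <;> simp
            congr 1
            · rw [double_sum_ite (fun i => 0 ≤ c i) (fun j => ¬ 0 ≤ c j)
                (fun i => z i * c i / S) (fun j => z j • v j), hSS, div_self hSz,
                one_smul, hum]
            · rw [Finset.sum_comm, double_sum_ite (fun j => ¬ 0 ≤ c j) (fun i => 0 ≤ c i)
                (fun j => z j * (-c j) / S) (fun i => z i • v i), hTT, hup]
          have hco : (S - T) / S + T / S = 1 := by field_simp; ring
          have hfin : ((S - T) / S) • uP + (uN + (T / S) • uP) =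
              ((S - T) / S + T / S) • uP + uN := by
            funext t
            simp only [Pi.add_apply, Pi.smul_apply, smul_eq_mul]
            ring
          rw [hA, hB, hfin, hco, one_smul, hxsplit]
    · rintro ⟨z, hzpos, rfl⟩ a' ha'
      rw [dot_sum_smul]
      refine Finset.sum_nonneg fun i _ => mul_nonneg (hzpos i) ?_
      rcases List.mem_cons.mp ha' with rfl | ha'
      · rcases i with i | ⟨i, j⟩
        · simp only [Sum.elim_inl]
          split_ifs with h
          · rw [hc] at h; exact h
          · simp
        · simp only [Sum.elim_inr]
          split_ifs with h
          · have : a' ⬝ᵥ (c i • v j + (-c j) • v i) = 0 := by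
              simp only [dotProduct_add, dotProduct_smul, smul_eq_mul, hc]
              ring
            rw [this]
          · simp
      · rcases i with i | ⟨i, j⟩
        · simp only [Sum.elim_inl]
          split_ifs with h
          · exact hvL a' ha' i
          · simp
        · simp only [Sum.elim_inr]
          split_ifs with h
          · simp only [dotProduct_add, dotProduct_smul, smul_eq_mul]
            exact add_nonneg (mul_nonneg h.1 (hvL a' ha' j))
              (mul_nonneg (neg_nonneg.mpr (le_of_not_ge h.2)) (hvL a' ha' i))
          · simp
end Aux

/-- Weyl–Minkowski, one direction: every polyhedral cone is finitely
generated. -/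
theorem polyhedral_cone_finitely_generated (k : Type*) [Field k] [LinearOrder k] [IsStrictOrderedRing k]
    (n p : ℕ) (A : Matrix (Fin p) (Fin n) k) :
    ∃ (m : ℕ) (v : Fin m → Fin n → k),
      ∀ x : Fin n → k,
        (0 ≤ A.mulVec x) ↔
          ∃ z : Fin m → k, (∀ i, 0 ≤ z i) ∧ x = ∑ i, z i • v i := by
  obtain ⟨ι, _, v, hv⟩ := cone_fg_list (List.ofFn fun i : Fin p => A i)
  set e := Fintype.equivFin ι with he
  refine ⟨Fintype.card ι, fun i => v (e.symm i), fun x => ?_⟩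
  have h1 : (0 ≤ A.mulVec x) ↔ ∀ a ∈ List.ofFn (fun i : Fin p => A i), 0 ≤ a ⬝ᵥ x := by
    constructor
    · intro h a' ha'
      obtain ⟨i, rfl⟩ := List.mem_ofFn.mp ha'
      exact h i
    · intro h i
      exact h (A i) (List.mem_ofFn.mpr ⟨i, rfl⟩)
  rw [h1, hv]
  constructor
  · rintro ⟨z, hz, rfl⟩
    refine ⟨fun i => z (e.symm i), fun i => hz _, ?_⟩
    rw [← Equiv.sum_comp e.symm (fun i => z i • v i)]
  · rintro ⟨z, hz, rfl⟩
    refine ⟨fun i => z (e i), fun i => hz _, ?_⟩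
    refine (Fintype.sum_equiv e _ _ fun i => ?_).symm
    simp
end

section
/- Weyl–Minkowski theorem (other direction): every finitely generated cone cone({v₁,…,v_p}) ⊆ kⁿ is polyhedral, i.e. there exists a matrix A such that cone({v₁,…,v_p}) = {x ∈ kⁿ : A x ≥ 0}. -/
private lemma wm_aux_pos {k : Type*} [Field k] [LinearOrder k] [IsStrictOrderedRing k] {c D t : k}
    (hc : 0 < c) (ht : -D / c ≤ t) : 0 ≤ D + c * t := by
  rw [div_le_iff₀ hc] at ht
  nlinarith

private lemma wm_aux_neg {k : Type*} [Field k] [LinearOrder k] [IsStrictOrderedRing k] {c D t : k}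
    (hc : c < 0) (ht : t ≤ -D / c) : 0 ≤ D + c * t := by
  rw [le_div_iff_of_neg hc] at ht
  nlinarith

/-- One step of Fourier–Motzkin elimination, list version. -/
private lemma wm_fm_list {k : Type*} [Field k] [LinearOrder k] [IsStrictOrderedRing k] (n : ℕ)
    (L : List (Fin (n + 1) → k)) :
    ∃ L' : List (Fin n → k), ∀ x : Fin n → k,
      (∃ t : k, ∀ a ∈ L, 0 ≤ ∑ j, a j * (Fin.snoc x t : Fin (n+1) → k) j) ↔
        ∀ b ∈ L', 0 ≤ ∑ j, b j * x j := by
  classical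
  set c : (Fin (n + 1) → k) → k := fun a => a (Fin.last n) with hc
  set r : (Fin (n + 1) → k) → (Fin n → k) := fun a j => a j.castSucc with hr
  refine ⟨((L.filter fun a => decide (c a = 0)).map r) ++
      (((L.filter fun a => decide (0 < c a)) ×ˢ (L.filter fun a => decide (c a < 0))).map
        fun ab => fun j => c ab.1 * r ab.2 j - c ab.2 * r ab.1 j), fun x => ?_⟩
  have hdot : ∀ (a : Fin (n + 1) → k) (t : k),
      ∑ j, a j * (Fin.snoc x t : Fin (n+1) → k) j = (∑ j, r a j * x j) + c a * t := by
    intro a t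
    rw [Fin.sum_univ_castSucc]
    simp [hr, hc]
  have hrow : ∀ a b : Fin (n + 1) → k,
      ∑ j, (c a * r b j - c b * r a j) * x j
        = c a * (∑ j, r b j * x j) - c b * (∑ j, r a j * x j) := by
    intro a b
    rw [Finset.mul_sum, Finset.mul_sum, ← Finset.sum_sub_distrib]
    refine Finset.sum_congr rfl fun j _ => by ring
  constructor
  · rintro ⟨t, ht⟩ b hb
    rcases List.mem_append.1 hb with hb | hb
    · rcases List.mem_map.1 hb with ⟨a, ha, rfl⟩
      rcases List.mem_filter.1 ha with ⟨haL, ha0⟩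
      have ha0 : c a = 0 := of_decide_eq_true ha0
      have h := ht a haL
      rw [hdot a t, ha0, zero_mul, add_zero] at h
      exact h
    · rcases List.mem_map.1 hb with ⟨⟨a1, a2⟩, ha, rfl⟩
      rcases List.mem_product.1 ha with ⟨h1, h2⟩
      rcases List.mem_filter.1 h1 with ⟨h1L, h1p⟩
      rcases List.mem_filter.1 h2 with ⟨h2L, h2p⟩
      have h1p : 0 < c a1 := of_decide_eq_true h1p
      have h2p : c a2 < 0 := of_decide_eq_true h2p
      have e1 := ht a1 h1L
      have e2 := ht a2 h2L
      rw [hdot] at e1 e2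
      rw [hrow]
      nlinarith [mul_nonneg h1p.le e2, mul_nonneg (neg_nonneg.2 h2p.le) e1]
  · intro h
    have hz : ∀ a ∈ L, c a = 0 → 0 ≤ ∑ j, r a j * x j := by
      intro a ha ha0
      exact h (r a) (List.mem_append.2 (Or.inl
        (List.mem_map_of_mem (f := r) (List.mem_filter.2 ⟨ha, decide_eq_true ha0⟩))))
    have hpn : ∀ a1 ∈ L, ∀ a2 ∈ L, 0 < c a1 → c a2 < 0 →
        0 ≤ c a1 * (∑ j, r a2 j * x j) - c a2 * (∑ j, r a1 j * x j) := by
      intro a1 h1 a2 h2 p1 p2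
      have := h _ (List.mem_append.2 (Or.inr (List.mem_map_of_mem
        (List.mem_product.2 ⟨List.mem_filter.2 ⟨h1, decide_eq_true p1⟩,
          List.mem_filter.2 ⟨h2, decide_eq_true p2⟩⟩))))
      rwa [hrow] at this
    by_cases hneg : ∃ a ∈ L, c a < 0
    · have hfin : (L.toFinset.filter fun a => c a < 0).Nonempty := by
        obtain ⟨a, haL, han⟩ := hneg
        exact ⟨a, Finset.mem_filter.2 ⟨List.mem_toFinset.2 haL, han⟩⟩
      obtain ⟨a0, ha0, hmin⟩ :=
        Finset.exists_min_image _ (fun a => -(∑ j, r a j * x j) / c a) hfin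
      rcases Finset.mem_filter.1 ha0 with ⟨ha0L, ha0n⟩
      refine ⟨-(∑ j, r a0 j * x j) / c a0, fun a ha => ?_⟩
      rw [hdot]
      rcases lt_trichotomy (c a) 0 with hca | hca | hca
      · exact wm_aux_neg hca
          (hmin a (Finset.mem_filter.2 ⟨List.mem_toFinset.2 ha, hca⟩))
      · rw [hca, zero_mul, add_zero]
        exact hz a ha hca
      · have hp := hpn a ha a0 (List.mem_toFinset.1 ha0L) hca ha0n
        have hne : c a0 ≠ 0 := ne_of_lt ha0n
        have heq : (∑ j, r a j * x j) + c a * (-(∑ j, r a0 j * x j) / c a0)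
            = (c a0 * (∑ j, r a j * x j) - c a * (∑ j, r a0 j * x j)) / c a0 := by
          field_simp
          ring
        rw [heq]
        exact div_nonneg_iff.2 (Or.inr ⟨by linarith, ha0n.le⟩)
    · push_neg at hneg
      by_cases hpos : ∃ a ∈ L, 0 < c a
      · have hfin : (L.toFinset.filter fun a => 0 < c a).Nonempty := by
          obtain ⟨a, haL, hap⟩ := hpos
          exact ⟨a, Finset.mem_filter.2 ⟨List.mem_toFinset.2 haL, hap⟩⟩
        obtain ⟨a0, ha0, hmax⟩ :=
          Finset.exists_max_image _ (fun a => -(∑ j, r a j * x j) / c a) hfin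
        rcases Finset.mem_filter.1 ha0 with ⟨ha0L, ha0p⟩
        refine ⟨-(∑ j, r a0 j * x j) / c a0, fun a ha => ?_⟩
        rw [hdot]
        rcases lt_trichotomy (c a) 0 with hca | hca | hca
        · exact absurd hca (not_lt.2 (hneg a ha))
        · rw [hca, zero_mul, add_zero]
          exact hz a ha hca
        · exact wm_aux_pos hca
            (hmax a (Finset.mem_filter.2 ⟨List.mem_toFinset.2 ha, hca⟩))
      · push_neg at hpos
        refine ⟨0, fun a ha => ?_⟩
        have hca : c a = 0 := le_antisymm (hpos a ha) (hneg a ha)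
        rw [hdot, hca, zero_mul, add_zero]
        exact hz a ha hca

/-- Eliminating the last `p` variables of a polyhedral system. -/
private lemma wm_elim_list {k : Type*} [Field k] [LinearOrder k] [IsStrictOrderedRing k] (p : ℕ) :
    ∀ (n : ℕ) (L : List (Fin (n + p) → k)),
    ∃ M : List (Fin n → k), ∀ x : Fin n → k,
      (∃ z : Fin p → k, ∀ a ∈ L, 0 ≤ ∑ j, a j * (Fin.append x z) j) ↔
        ∀ b ∈ M, 0 ≤ ∑ j, b j * x j := by
  induction p with
  | zero =>
    intro n L
    refine ⟨L, fun x => ?_⟩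
    have happ : ∀ z : Fin 0 → k, Fin.append x z = x := by
      intro z
      rw [Subsingleton.elim z Fin.elim0, Fin.append_elim0]
      funext j
      exact congrArg x (Fin.ext rfl)
    constructor
    · rintro ⟨z, hzc⟩ b hb
      have := hzc b hb
      rwa [happ] at this
    · intro hb
      exact ⟨Fin.elim0, fun a ha => by rw [happ]; exact hb a ha⟩
  | succ p ih =>
    intro n L
    obtain ⟨L', hL'⟩ := wm_fm_list (n + p) L
    obtain ⟨M, hM⟩ := ih n L'
    refine ⟨M, fun x => ?_⟩
    rw [← hM x]
    constructor
    · rintro ⟨z, hz⟩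
      refine ⟨fun i => z i.castSucc,
        (hL' (Fin.append x fun i => z i.castSucc)).1 ⟨z (Fin.last p), fun a ha => ?_⟩⟩
      have hs : Fin.snoc (Fin.append x fun i => z i.castSucc) (z (Fin.last p))
          = Fin.append x z := by
        rw [← Fin.append_snoc]
        exact congrArg _ (Fin.snoc_init_self z)
      rw [hs]
      exact hz a ha
    · rintro ⟨z', hz'⟩
      obtain ⟨t, ht⟩ := (hL' (Fin.append x z')).2 hz'
      refine ⟨Fin.snoc z' t, fun a ha => ?_⟩
      rw [Fin.append_snoc]
      exact ht a ha

/-- Weyl–Minkowski, other direction: every finitely generated cone is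
polyhedral. -/
theorem finitely_generated_cone_polyhedral (k : Type*) [Field k] [LinearOrder k] [IsStrictOrderedRing k]
    (n p : ℕ) (v : Fin p → Fin n → k) :
    ∃ (q : ℕ) (A : Matrix (Fin q) (Fin n) k),
      ∀ x : Fin n → k,
        (∃ z : Fin p → k, (∀ i, 0 ≤ z i) ∧ x = ∑ i, z i • v i) ↔
          0 ≤ A.mulVec x := by
  classical
  set R : List (Fin (n + p) → k) :=
    ((List.finRange n).map fun j => Fin.append (Pi.single j 1 : Fin n → k) fun i => -(v i j)) ++
    ((List.finRange n).map fun j => Fin.append (-(Pi.single j 1 : Fin n → k)) fun i => v i j) ++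
    ((List.finRange p).map fun i => Fin.append (0 : Fin n → k) (Pi.single i 1 : Fin p → k)) with hR
  obtain ⟨M, hM⟩ := wm_elim_list p n R
  refine ⟨M.length, Matrix.of fun i j => M.get i j, fun x => ?_⟩
  have hda : ∀ (u : Fin n → k) (w z : Fin p → k),
      ∑ l, Fin.append u w l * Fin.append x z l
        = (∑ j, u j * x j) + ∑ i, w i * z i := by
    intro u w z
    rw [Fin.sum_univ_add]
    simp [Fin.append_left, Fin.append_right]
  have hsn : ∀ (j : Fin n) (y : Fin n → k), ∑ l, (Pi.single j 1 : Fin n → k) l * y l = y j := by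
    intro j y
    simp [Pi.single_apply]
  have hsp : ∀ (i : Fin p) (y : Fin p → k), ∑ l, (Pi.single i 1 : Fin p → k) l * y l = y i := by
    intro i y
    simp [Pi.single_apply]
  have hRchar : ∀ z : Fin p → k,
      (∀ a ∈ R, 0 ≤ ∑ l, a l * Fin.append x z l) ↔
        ((∀ i, 0 ≤ z i) ∧ x = ∑ i, z i • v i) := by
    intro z
    constructor
    · intro h
      have hz : ∀ i, 0 ≤ z i := by
        intro i
        have := h _ (List.mem_append.2 (Or.inr
          (List.mem_map_of_mem (List.mem_finRange i))))
        rw [hda] at this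
        simpa [hsp] using this
      refine ⟨hz, funext fun j => ?_⟩
      have h1 := h _ (List.mem_append.2 (Or.inl (List.mem_append.2 (Or.inl
        (List.mem_map_of_mem (List.mem_finRange j))))))
      have h2 := h _ (List.mem_append.2 (Or.inl (List.mem_append.2 (Or.inr
        (List.mem_map_of_mem (List.mem_finRange j))))))
      rw [hda] at h1 h2
      rw [hsn] at h1
      have hn : ∑ l, (-(Pi.single j 1 : Fin n → k)) l * x l = -(x j) := by
        rw [show ∑ l, (-(Pi.single j 1 : Fin n → k)) l * x l
            = -∑ l, (Pi.single j 1 : Fin n → k) l * x l by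
          rw [← Finset.sum_neg_distrib]
          exact Finset.sum_congr rfl fun l _ => by
            simp only [Pi.neg_apply]
            ring]
        rw [hsn]
      rw [hn] at h2
      have hsum : (∑ i, z i • v i) j = ∑ i, z i * v i j := by
        rw [Finset.sum_apply]
        simp [smul_eq_mul]
      rw [hsum]
      have hc : ∑ i, z i * v i j = ∑ i, v i j * z i :=
        Finset.sum_congr rfl fun i _ => mul_comm _ _
      have hc2 : ∑ i, -v i j * z i = -∑ i, v i j * z i := by
        rw [← Finset.sum_neg_distrib]
        exact Finset.sum_congr rfl fun i _ => by ring
      rw [hc2] at h1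
      rw [hc]
      linarith
    · rintro ⟨hz, hx⟩ a ha
      have hsum : ∀ j, x j = ∑ i, v i j * z i := by
        intro j
        rw [hx, Finset.sum_apply]
        exact Finset.sum_congr rfl fun i _ => by simp [smul_eq_mul, mul_comm]
      rcases List.mem_append.1 ha with ha | ha
      · rcases List.mem_append.1 ha with ha | ha
        · rcases List.mem_map.1 ha with ⟨j, _, rfl⟩
          rw [hda, hsn]
          have hc2 : ∑ i, -v i j * z i = -∑ i, v i j * z i := by
            rw [← Finset.sum_neg_distrib]
            exact Finset.sum_congr rfl fun i _ => by ring
          rw [hc2, hsum j]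
          simp
        · rcases List.mem_map.1 ha with ⟨j, _, rfl⟩
          rw [hda]
          have hn : ∑ l, (-(Pi.single j 1 : Fin n → k)) l * x l = -(x j) := by
            rw [show ∑ l, (-(Pi.single j 1 : Fin n → k)) l * x l
                = -∑ l, (Pi.single j 1 : Fin n → k) l * x l by
              rw [← Finset.sum_neg_distrib]
              exact Finset.sum_congr rfl fun l _ => by
                simp only [Pi.neg_apply]
                ring]
            rw [hsn]
          rw [hn, hsum j]
          simp
      · rcases List.mem_map.1 ha with ⟨i, _, rfl⟩
        rw [hda]
        simp [hsp, hz i]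
  have hmv : (0 ≤ (Matrix.of fun i j => M.get i j).mulVec x) ↔
      ∀ b ∈ M, 0 ≤ ∑ j, b j * x j := by
    constructor
    · intro h b hb
      obtain ⟨i, rfl⟩ := List.mem_iff_get.1 hb
      have := h i
      simpa [Matrix.mulVec, dotProduct] using this
    · intro h i
      have := h (M.get i) (List.get_mem M i)
      simpa [Matrix.mulVec, dotProduct] using this
  rw [hmv, ← hM x]
  exact exists_congr fun z => (hRchar z).symm
end

section
/- Homogenization preserves inclusion of non-empty polyhedra: let P₁ = {x ∈ kⁿ : A x ≤ b} and P₂ = {x ∈ kⁿ : C x ≤ d} be non-empty, and define their homogenizations P₁^H = {(x, y) ∈ k^(n+1) : A x ≤ b y ∧ y ≥ 0} and P₂^H = {(x, y) : C x ≤ d y ∧ y ≥ 0}. Then P₁ ⊆ P₂ if and only if P₁^H ⊆ P₂^H. -/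
/-- Homogenization preserves inclusion of non-empty polyhedra. -/
theorem homogenization_inclusion (k : Type*) [Field k] [LinearOrder k] [IsStrictOrderedRing k]
    (n p q : ℕ) (A : Matrix (Fin p) (Fin n) k) (b : Fin p → k)
    (C : Matrix (Fin q) (Fin n) k) (d : Fin q → k)
    (h₁ : ∃ x : Fin n → k, A.mulVec x ≤ b)
    (h₂ : ∃ x : Fin n → k, C.mulVec x ≤ d) :
    ({x : Fin n → k | A.mulVec x ≤ b} ⊆ {x : Fin n → k | C.mulVec x ≤ d}) ↔
      ({z : (Fin n → k) × k | A.mulVec z.1 ≤ z.2 • b ∧ 0 ≤ z.2} ⊆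
        {z : (Fin n → k) × k | C.mulVec z.1 ≤ z.2 • d ∧ 0 ≤ z.2}) := by
  obtain ⟨x₀, hx₀⟩ := h₁
  constructor
  · intro h z hz
    obtain ⟨hz1, hz2⟩ := hz
    rcases eq_or_lt_of_le hz2 with hy | hy
    · -- z.2 = 0 : recession direction
      refine ⟨?_, hz2⟩
      rw [← hy] at hz1 ⊢
      rw [zero_smul] at hz1 ⊢
      intro i
      by_contra hcon
      push_neg at hcon
      set c := C.mulVec z.1 i with hc
      have hmem : ∀ t : k, 0 ≤ t → A.mulVec (x₀ + t • z.1) ≤ b := by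
        intro t ht j
        have h1 := hz1 j
        have : A.mulVec (x₀ + t • z.1) j
            = A.mulVec x₀ j + t * A.mulVec z.1 j := by
          simp [Matrix.mulVec_add, Matrix.mulVec_smul]
        rw [this]
        have : t * A.mulVec z.1 j ≤ 0 :=
          mul_nonpos_of_nonneg_of_nonpos ht h1
        linarith [hx₀ j]
      set t : k := max 0 ((d i - C.mulVec x₀ i + 1) / c) with htdef
      have ht0 : 0 ≤ t := le_max_left _ _
      have hmem2 := h (hmem t ht0) i
      have hCe : C.mulVec (x₀ + t • z.1) i
          = C.mulVec x₀ i + t * c := by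
        simp [Matrix.mulVec_add, Matrix.mulVec_smul, hc]
      rw [hCe] at hmem2
      have ht1 : (d i - C.mulVec x₀ i + 1) / c ≤ t := le_max_right _ _
      have : d i - C.mulVec x₀ i + 1 ≤ t * c := by
        have := mul_le_mul_of_nonneg_right ht1 (le_of_lt hcon)
        rwa [div_mul_cancel₀ _ (ne_of_gt hcon)] at this
      linarith
    · -- z.2 > 0 : scale down
      refine ⟨?_, hz2⟩
      have hmem : A.mulVec (z.2⁻¹ • z.1) ≤ b := by
        intro j
        have h1 := hz1 j
        have he : A.mulVec (z.2⁻¹ • z.1) j = z.2⁻¹ * A.mulVec z.1 j := by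
          simp [Matrix.mulVec_smul]
        rw [he]
        have := mul_le_mul_of_nonneg_left h1 (le_of_lt (inv_pos.mpr hy))
        calc z.2⁻¹ * A.mulVec z.1 j ≤ z.2⁻¹ * (z.2 • b) j := this
          _ = b j := by
            simp [Pi.smul_apply, smul_eq_mul, ← mul_assoc,
              inv_mul_cancel₀ (ne_of_gt hy)]
      have h2 := h hmem
      intro j
      have h3 := h2 j
      have he : C.mulVec (z.2⁻¹ • z.1) j = z.2⁻¹ * C.mulVec z.1 j := by
        simp [Matrix.mulVec_smul]
      rw [he] at h3
      have := mul_le_mul_of_nonneg_left h3 (le_of_lt hy)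
      rw [← mul_assoc, mul_inv_cancel₀ (ne_of_gt hy), one_mul] at this
      simpa [Pi.smul_apply, smul_eq_mul] using this
  · intro h x hx
    have := h (a := (x, 1)) ⟨by simpa using hx, zero_le_one⟩
    simpa using this.1
end
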